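/- arXiv:1711.05118 — 4 statements merged into one kernel-verified Lean document; each statement's English description precedes it below -/
import Mathlib

section
/- For every integer n ≥ 2, the value ζ(n) − ((1+(−1)^{n−1})·3^{n−1}/(1−3^{n−1}))·Li_n(ξ₃) lies in ℚ·(2πi)^n, where ξ₃ = e^{2πi/3} and Li_n(z) = Σ_{k≥1} z^k/k^n. -/
open Complex Real

noncomputable def Li (n : ℕ) (z : ℂ) : ℂ := ∑' k : ℕ, z ^ (k + 1) / ((k : ℂ) + 1) ^ n

noncomputable def xi3 : ℂ := Complex.exp (2 * Real.pi * Complex.I / 3)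

lemma xi3_pow_three : xi3 ^ 3 = 1 := by
  rw [xi3, ← Complex.exp_nat_mul]
  rw [show (3 : ℕ) * (2 * (Real.pi:ℂ) * Complex.I / 3) = 2 * Real.pi * Complex.I by
    push_cast; ring]
  exact Complex.exp_two_pi_mul_I

lemma xi3_ne_one : xi3 ≠ 1 := by
  intro h
  rw [xi3, Complex.exp_eq_one_iff] at h
  obtain ⟨k, hk⟩ := h
  have h2 : ((3 * k : ℤ) : ℂ) * (2 * Real.pi * Complex.I) = 1 * (2 * Real.pi * Complex.I) := by
    push_cast
    rw [one_mul]; linear_combination (-3:ℂ) * hk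
  have h3 := mul_right_cancel₀ Complex.two_pi_I_ne_zero h2
  have h4 : (3 * k : ℤ) = 1 := by exact_mod_cast h3
  omega

lemma xi3_cube_root_sum : 1 + xi3 + xi3 ^ 2 = 0 := by
  have h : (xi3 - 1) * (1 + xi3 + xi3 ^ 2) = 0 := by
    linear_combination xi3_pow_three
  rcases mul_eq_zero.mp h with h1 | h2
  · exact absurd (by linear_combination h1 : xi3 = 1) xi3_ne_one
  · exact h2

lemma xi3_inv : xi3⁻¹ = xi3 ^ 2 := by
  apply inv_eq_of_mul_eq_one_right
  calc xi3 * xi3 ^ 2 = xi3 ^ 3 := by ring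
  _ = 1 := xi3_pow_three

lemma xi3_norm : ‖xi3‖ = 1 := by
  rw [xi3, show (2 * (Real.pi:ℂ) * Complex.I / 3) = ((2 * Real.pi / 3 : ℝ) : ℂ) * Complex.I by
    push_cast; ring]
  simp [Complex.norm_exp]

lemma xi3_pow_mod (j : ℕ) : xi3 ^ j = xi3 ^ (j % 3) := by
  conv_lhs => rw [← Nat.div_add_mod j 3, pow_add, pow_mul, xi3_pow_three, one_pow, one_mul]

lemma xi3_cube_sum {j : ℕ} (h : ¬ 3 ∣ j) : 1 + xi3 ^ j + (xi3⁻¹) ^ j = 0 := by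
  rw [xi3_inv, ← pow_mul, xi3_pow_mod j, xi3_pow_mod (2 * j)]
  have hj : j % 3 = 1 ∧ (2*j) % 3 = 2 ∨ j % 3 = 2 ∧ (2*j) % 3 = 1 := by omega
  rcases hj with ⟨h1, h2⟩ | ⟨h1, h2⟩ <;> rw [h1, h2]
  · rw [pow_one]; linear_combination xi3_cube_root_sum
  · rw [pow_one]; linear_combination xi3_cube_root_sum

lemma summable_aux {n : ℕ} (hn : 2 ≤ n) {z : ℂ} (hz : ‖z‖ = 1) :
    Summable (fun k : ℕ => z ^ k / (k : ℂ) ^ n) := by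
  apply Summable.of_norm
  have : (fun k : ℕ => ‖z ^ k / (k : ℂ) ^ n‖) = fun k : ℕ => 1 / (k : ℝ) ^ n := by
    funext k
    rw [norm_div, norm_pow, hz, one_pow, norm_pow, Complex.norm_natCast]
  rw [this]
  exact summable_one_div_nat_pow.mpr (by omega)

lemma fourier_xi3 (k : ℕ) :
    (fourier (k : ℤ) (((1:ℝ)/3 : ℝ) : UnitAddCircle) : ℂ) = xi3 ^ k := by
  rw [fourier_coe_apply, xi3, ← Complex.exp_nat_mul]
  congr 1
  push_cast
  ring

lemma fourier_xi3_neg (k : ℕ) :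
    (fourier (-(k : ℤ)) (((1:ℝ)/3 : ℝ) : UnitAddCircle) : ℂ) = (xi3⁻¹) ^ k := by
  rw [fourier_coe_apply, xi3, ← Complex.exp_neg, ← Complex.exp_nat_mul]
  congr 1
  push_cast
  ring

lemma bernoulliFun_third (n : ℕ) :
    bernoulliFun n ((1:ℝ)/3) = (((Polynomial.bernoulli n).eval ((1:ℚ)/3) : ℚ) : ℝ) := by
  rw [bernoulliFun, show ((1:ℝ)/3) = algebraMap ℚ ℝ ((1:ℚ)/3) by norm_num,
    Polynomial.eval_map, Polynomial.eval₂_at_apply]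
  rfl

lemma alg (Z A q P F : ℂ) (hP : P ≠ 0) (hPne : 1 - P ≠ 0) (hF : F ≠ 0) :
    Z - (1 + 1) * P / (1 - P) * (((3 / (P * 3) - 1) * Z - A * q / F) / 2) = P * q / ((1 - P) * F) * A := by
  have hD : (1 - P) * (P * 3 * F * 2) ≠ 0 :=
    mul_ne_zero hPne (mul_ne_zero (mul_ne_zero (mul_ne_zero hP (by norm_num)) hF) (by norm_num))
  field_simp
  ring

theorem stmt0 (n : ℕ) (hn : 2 ≤ n) :
    ∃ q : ℚ,
      riemannZeta n -
          ((1 + (-1 : ℂ) ^ (n - 1)) * 3 ^ (n - 1) / (1 - 3 ^ (n - 1))) * Li n xi3 =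
        (q : ℂ) * (2 * Real.pi * Complex.I) ^ n := by
  have hn0 : n ≠ 0 := by omega
  -- HasSum for Li n xi3
  have hsum := summable_aux hn xi3_norm
  have hLi : ∑' k : ℕ, xi3 ^ k / (k : ℂ) ^ n = Li n xi3 := by
    rw [Summable.tsum_eq_zero_add hsum]
    simp only [Nat.cast_zero, zero_pow hn0, div_zero, zero_add, Li]
    exact tsum_congr fun k => by push_cast; ring_nf
  have hS : HasSum (fun k : ℕ => xi3 ^ k / (k : ℂ) ^ n) (Li n xi3) := hLi ▸ hsum.hasSum
  have hinvnorm : ‖xi3⁻¹‖ = 1 := by rw [norm_inv, xi3_norm]; norm_num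
  have hsum' := summable_aux hn hinvnorm
  set S' : ℂ := ∑' k : ℕ, (xi3⁻¹) ^ k / (k : ℂ) ^ n with hS'def
  have hS' : HasSum (fun k : ℕ => (xi3⁻¹) ^ k / (k : ℂ) ^ n) S' := hsum'.hasSum
  have hsumZ : Summable (fun k : ℕ => 1 / (k : ℂ) ^ n) := by
    have := summable_aux hn (z := 1) (by simp)
    simpa using this
  have hZ : HasSum (fun k : ℕ => 1 / (k : ℂ) ^ n) (riemannZeta n) := by
    have := hsumZ.hasSum
    rwa [← zeta_nat_eq_tsum_of_gt_one (by omega : 1 < n)] at this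
  -- trisection identity
  have hTri : HasSum (fun k : ℕ => (1 + xi3 ^ k + (xi3⁻¹) ^ k) / (k : ℂ) ^ n)
      (riemannZeta n + Li n xi3 + S') := by
    have h := (hZ.add hS).add hS'
    have heq : (fun k : ℕ => 1 / (k : ℂ) ^ n + xi3 ^ k / (k : ℂ) ^ n + (xi3⁻¹) ^ k / (k : ℂ) ^ n)
        = fun k : ℕ => (1 + xi3 ^ k + (xi3⁻¹) ^ k) / (k : ℂ) ^ n := by
      funext k; rw [← add_div, ← add_div]
    rwa [heq] at h
  have hTri2 : HasSum (fun k : ℕ => (1 + xi3 ^ k + (xi3⁻¹) ^ k) / (k : ℂ) ^ n)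
      ((3 / 3 ^ n : ℂ) * riemannZeta n) := by
    have hinj : Function.Injective (fun m : ℕ => 3 * m) := fun a b h => by
      dsimp at h; omega
    have hvan : ∀ k ∉ Set.range (fun m : ℕ => 3 * m),
        (1 + xi3 ^ k + (xi3⁻¹) ^ k) / (k : ℂ) ^ n = 0 := by
      intro k hk
      have hnd : ¬ 3 ∣ k := by
        rintro ⟨c, hc⟩; exact hk ⟨c, hc.symm⟩
      rw [xi3_cube_sum hnd, zero_div]
    rw [← hinj.hasSum_iff hvan]
    have hcomp : ((fun k : ℕ => (1 + xi3 ^ k + (xi3⁻¹) ^ k) / (k : ℂ) ^ n) ∘ fun m : ℕ => 3 * m)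
        = fun m : ℕ => (3 / 3 ^ n : ℂ) * (1 / (m : ℂ) ^ n) := by
      funext m
      simp only [Function.comp_apply, inv_pow, pow_mul xi3 3 m, xi3_pow_three, one_pow, inv_one]
      push_cast
      rw [mul_pow, mul_one_div, div_div]
      norm_num
    rw [hcomp]
    exact hZ.mul_left _
  have key1 : riemannZeta n + Li n xi3 + S' = (3 / 3 ^ n : ℂ) * riemannZeta n :=
    hTri.unique hTri2
  -- Fourier / Bernoulli identity
  have hx : (1:ℝ)/3 ∈ Set.Icc (0:ℝ) 1 := by norm_num
  have hF := hasSum_one_div_nat_pow_mul_fourier hn hx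
  simp only [fourier_xi3, fourier_xi3_neg, bernoulliFun_third] at hF
  have hF2 : HasSum (fun k : ℕ => (1:ℂ) / (k:ℂ) ^ n * (xi3 ^ k + (-1:ℂ) ^ n * (xi3⁻¹) ^ k))
      (Li n xi3 + (-1:ℂ) ^ n * S') := by
    have h := hS.add (hS'.mul_left ((-1:ℂ) ^ n))
    have heq : (fun k : ℕ => xi3 ^ k / (k:ℂ) ^ n + (-1:ℂ) ^ n * ((xi3⁻¹) ^ k / (k:ℂ) ^ n))
        = fun k : ℕ => (1:ℂ) / (k:ℂ) ^ n * (xi3 ^ k + (-1:ℂ) ^ n * (xi3⁻¹) ^ k) := by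
      funext k; ring
    rwa [heq] at h
  set qB : ℚ := (Polynomial.bernoulli n).eval ((1:ℚ)/3) with hqB
  have key2 := hF2.unique hF
  have hfac : ((n.factorial : ℕ) : ℂ) ≠ 0 := by
    exact_mod_cast Nat.factorial_ne_zero n
  rcases Nat.even_or_odd n with heven | hodd
  · -- even case
    obtain ⟨m, hm⟩ := heven
    have hmn : n = 2 * m := by omega
    have hm0 : m ≠ 0 := by omega
    have hodd1 : Odd (n - 1) := ⟨m - 1, by omega⟩
    rw [hodd1.neg_one_pow]
    refine ⟨-(bernoulli n : ℚ) / (2 * n.factorial), ?_⟩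
    rw [show ((1:ℂ) + -1) = 0 by ring, zero_mul, zero_div, zero_mul, sub_zero]
    rw [hmn, show ((2*m : ℕ) : ℂ) = 2 * (m:ℂ) by push_cast; ring,
      riemannZeta_two_mul_nat hm0]
    have hI : (Complex.I) ^ (2 * m) = (-1:ℂ) ^ m := by
      rw [pow_mul, Complex.I_sq]
    have h2p : (2:ℂ) ^ (2 * m - 1) = 2 ^ (2 * m) / 2 := by
      rw [eq_div_iff (two_ne_zero), ← pow_succ]; congr 1; omega
    have hfac2 : (((2*m).factorial : ℕ) : ℂ) ≠ 0 := by
      exact_mod_cast Nat.factorial_ne_zero _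
    rw [h2p, mul_pow, mul_pow, hI]
    push_cast
    field_simp
    ring
  · -- odd case
    have heo : Even (n - 1) := by
      obtain ⟨m, hm⟩ := hodd; exact ⟨m, by omega⟩
    rw [heo.neg_one_pow]
    have hneg : ((-1:ℂ)) ^ n = -1 := hodd.neg_one_pow
    rw [hneg] at key2
    have h3pow : (3:ℂ) ^ n = 3 ^ (n-1) * 3 := by
      rw [← pow_succ]; congr 1; omega
    have hPne : (1:ℂ) - 3 ^ (n-1) ≠ 0 := by
      intro h
      have h1 : ((3:ℝ) ^ (n-1) : ℂ) = 1 := by push_cast; linear_combination -h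
      have h2 : (3:ℝ) ^ (n-1) = 1 := by exact_mod_cast h1
      have h3 : (1:ℝ) < 3 ^ (n-1) := one_lt_pow₀ (by norm_num) (by omega)
      linarith
    have h3P : (3:ℂ) ^ (n-1) ≠ 0 := pow_ne_zero _ (by norm_num)
    refine ⟨3 ^ (n-1) * qB / ((1 - 3 ^ (n-1)) * n.factorial), ?_⟩
    have hq : ((3 ^ (n-1) * qB / ((1 - 3 ^ (n-1)) * n.factorial) : ℚ) : ℂ)
        = 3 ^ (n-1) * ((qB:ℝ):ℂ) / ((1 - 3 ^ (n-1)) * (n.factorial : ℂ)) := by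
      push_cast
      ring
    rw [hq]
    have hL : Li n xi3 = ((3 / 3^n - 1) * riemannZeta n
        - (2 * (Real.pi:ℂ) * Complex.I) ^ n * ((qB:ℝ):ℂ) / (n.factorial : ℂ)) / 2 := by
      linear_combination key1 / 2 + key2 / 2
    rw [hL, h3pow]
    exact alg (riemannZeta n) ((2 * (Real.pi:ℂ) * Complex.I) ^ n) (((qB:ℝ):ℂ))
      ((3:ℂ) ^ (n-1)) ((n.factorial : ℂ)) h3P hPne hfac
end

section
/- Let A be a linearly ordered alphabet whose smallest letter is 0, and let w be a word over A that is not a power of the single letter 0. Then w is a Lyndon word if and only if w is strictly smaller (in lexicographic order) than every nontrivial rotation of w that does not end in the letter 0. -/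
/-- A word over a linearly ordered alphabet is Lyndon if it is nonempty and strictly
smaller (lexicographically) than all of its nontrivial rotations. -/
def IsLyndon {A : Type*} [LinearOrder A] (w : List A) : Prop :=
  w ≠ [] ∧ ∀ u v : List A, w = u ++ v → u ≠ [] → v ≠ [] → w < v ++ u

private lemma rot_z_lt {A : Type*} [LinearOrder A] (z : A) (hz : ∀ a : A, z ≤ a) :
    ∀ t : List A, (∃ b ∈ t, b ≠ z) → z :: t < t ++ [z] := by
  intro t
  induction t with
  | nil => simp
  | cons a t' ih =>
    intro h
    rcases eq_or_lt_of_le (hz a) with rfl | hlt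
    · have h' : ∃ b ∈ t', b ≠ z := by
        rcases h with ⟨b, hb, hbz⟩
        rcases List.mem_cons.1 hb with rfl | hb'
        · exact absurd rfl hbz
        · exact ⟨b, hb', hbz⟩
      exact List.Lex.cons (ih h')
    · exact List.Lex.rel hlt

theorem stmt7 {A : Type*} [LinearOrder A] (z : A) (hz : ∀ a : A, z ≤ a)
    (w : List A) (hw : w ≠ List.replicate w.length z) :
    IsLyndon w ↔
      (w ≠ [] ∧ ∀ u v : List A, w = u ++ v → u ≠ [] → v ≠ [] →
        (v ++ u).getLast? ≠ some z → w < v ++ u) := by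
  have hmem : ∃ b ∈ w, b ≠ z := by
    by_contra h
    push_neg at h
    exact hw ((List.eq_replicate_length).2 h)
  constructor
  · rintro ⟨hne, h⟩
    exact ⟨hne, fun u v huv hu hv _ => h u v huv hu hv⟩
  · rintro ⟨hne, h⟩
    refine ⟨hne, ?_⟩
    -- strong induction on length of u
    suffices H : ∀ n : ℕ, ∀ u v : List A, u.length = n → w = u ++ v → u ≠ [] → v ≠ [] →
        w < v ++ u by
      intro u v huv hu hv
      exact H u.length u v rfl huv hu hv
    intro n
    induction n using Nat.strong_induction_on with
    | _ n ih =>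
      intro u v hlen huv hu hv
      by_cases hlast : (v ++ u).getLast? = some z
      · -- rotation ends in z, so u ends in z
        have hul : u.getLast? = some z := by
          rwa [List.getLast?_append_of_ne_nil v hu] at hlast
        obtain ⟨u', rfl⟩ : ∃ u', u = u' ++ [z] := by
          rcases List.eq_nil_or_concat u with rfl | ⟨u', a, rfl⟩
          · exact absurd rfl hu
          · refine ⟨u', ?_⟩
            have : a = z := by
              simpa [List.getLast?_concat] using hul
            rw [this]; simp
        rcases eq_or_ne u' [] with rfl | hu'
        · -- w = z :: v
          simp only [List.nil_append] at huv ⊢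
          rw [huv]
          apply rot_z_lt z hz
          have : ∃ b ∈ v, b ≠ z := by
            rcases hmem with ⟨b, hb, hbz⟩
            rw [huv] at hb
            rcases List.mem_cons.1 hb with rfl | hb'
            · exact absurd rfl hbz
            · exact ⟨b, hb', hbz⟩
          exact this
        · -- w = u' ++ (z :: v), rotation (z :: v) ++ u' has shorter "u"
          have huv' : w = u' ++ (z :: v) := by
            rw [huv]; simp
          have hlt1 : w < (z :: v) ++ u' :=
            ih u'.length (by simp [← hlen]) u' (z :: v) rfl huv' hu' (by simp)
          have hlt2 : (z :: v) ++ u' < v ++ (u' ++ [z]) := by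
            have : ∃ b ∈ v ++ u', b ≠ z := by
              by_contra hc
              push_neg at hc
              apply hw
              rw [List.eq_replicate_length]
              intro b hb
              rw [huv'] at hb
              rcases List.mem_append.1 hb with hb' | hb'
              · exact hc b (List.mem_append.2 (Or.inr hb'))
              · rcases List.mem_cons.1 hb' with rfl | hb''
                · rfl
                · exact hc b (List.mem_append.2 (Or.inl hb''))
            have := rot_z_lt z hz (v ++ u') this
            simpa using this
          exact lt_trans hlt1 hlt2
      · push_neg at hlast
        exact h u v huv hu hv hlast
end

section
/- In the shuffle algebra ℚ⟨X⟩ on an alphabet X (with shuffle product ⧢), for any word w, letters a, b and n ≥ 0, one has wba^n = Σ_{i=0}^{n} (−1)^i a^{n−i} ⧢ ((w ⧢ a^i)b), and hence the identity also holds after applying any shuffle-algebra character, where a^k denotes the word of k copies of a and juxtaposition is concatenation. -/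
/-- The shuffle product of two words, as a multiset of words (with multiplicities). -/
def shuffle {X : Type*} : List X → List X → Multiset (List X)
  | [], v => {v}
  | x :: u, [] => {x :: u}
  | x :: u, y :: v =>
      (shuffle u (y :: v)).map (x :: ·) + (shuffle (x :: u) v).map (y :: ·)
  termination_by u v => u.length + v.length

lemma shuffle_nil_right {X : Type*} (u : List X) : shuffle u [] = {u} := by
  cases u <;> rw [shuffle]

lemma shuffle_nil_left {X : Type*} (u : List X) : shuffle [] u = {u} := by
  rw [shuffle]

lemma shuffle_cons_cons {X : Type*} (x y : X) (u v : List X) :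
    shuffle (x::u) (y::v) = (shuffle u (y :: v)).map (x :: ·) + (shuffle (x :: u) v).map (y :: ·) := by
  rw [shuffle]

/-- shuffle of a single letter with aᵐ -/
lemma shuffle_single_replicate {X : Type*} (a : X) (m : ℕ) :
    shuffle [a] (List.replicate m a) =
      Multiset.replicate (m+1) (List.replicate (m+1) a) := by
  induction m with
  | zero => simp [shuffle_nil_right, List.replicate]
  | succ m ih =>
      rw [List.replicate_succ, shuffle_cons_cons, shuffle_nil_left, ih]
      simp [Multiset.replicate_succ, List.replicate_succ]

lemma shuffle_cons_single {X : Type*} (a x : X) (u : List X) :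
    shuffle (x::u) [a] = (shuffle u [a]).map (x :: ·) + {a::x::u} := by
  rw [shuffle_cons_cons, shuffle_nil_right]
  simp

/-- insertion lemma -/
lemma shuffle_single_word {X : Type*} (a b : X) (m : ℕ) (w : List X) :
    shuffle [a] (w ++ b :: List.replicate m a) =
      (shuffle w [a]).map (· ++ b :: List.replicate m a) +
        Multiset.replicate (m+1) (w ++ b :: List.replicate (m+1) a) := by
  induction w with
  | nil =>
      rw [List.nil_append, shuffle_cons_cons, shuffle_nil_left,
        shuffle_single_replicate, shuffle_nil_left]
      simp [Multiset.map_replicate]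
  | cons x w ih =>
      rw [List.cons_append, shuffle_cons_cons, shuffle_nil_left, ih,
        shuffle_cons_single]
      simp only [Multiset.map_add, Multiset.map_map, Multiset.map_replicate,
        Multiset.map_singleton, Function.comp]
      simp only [List.cons_append]
      abel

lemma shuffle_bind_single {X : Type*} (a : X) (w : List X) :
    ∀ i : ℕ, (shuffle w [a]).bind (fun u => shuffle u (List.replicate i a))
      = (i+1) • shuffle w (List.replicate (i+1) a) := by
  induction w with
  | nil =>
      intro i
      rw [shuffle_nil_left, Multiset.singleton_bind, shuffle_single_replicate,
        shuffle_nil_left, Multiset.nsmul_singleton]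
  | cons x w ihw =>
      intro i
      induction i with
      | zero =>
          simp only [List.replicate_zero, shuffle_nil_right, zero_add,
            List.replicate_one, one_smul]
          have := Multiset.bind_singleton (shuffle (x::w) [a]) (id : List X → List X)
          simpa using this
      | succ i ihi =>
          have key : (shuffle (x::w) [a]).bind (fun u => shuffle u (List.replicate i a))
              = ((shuffle w [a]).bind (fun u => shuffle (x::u) (List.replicate i a)))
                + shuffle (a::x::w) (List.replicate i a) := by
            rw [shuffle_cons_single, Multiset.add_bind, Multiset.singleton_bind,
              Multiset.bind_map]
          rw [shuffle_cons_single, Multiset.add_bind, Multiset.singleton_bind,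
            Multiset.bind_map]
          -- expand shuffle (x::u) (a :: rep i)
          have e1 : ∀ u : List X, shuffle (x::u) (List.replicate (i+1) a)
              = (shuffle u (List.replicate (i+1) a)).map (x :: ·)
                + (shuffle (x::u) (List.replicate i a)).map (a :: ·) := by
            intro u
            rw [List.replicate_succ, shuffle_cons_cons, ← List.replicate_succ]
          have e2 : shuffle (a::x::w) (List.replicate (i+1) a)
              = (shuffle (x::w) (List.replicate (i+1) a)).map (a :: ·)
                + (shuffle (a::x::w) (List.replicate i a)).map (a :: ·) := by
            rw [List.replicate_succ, shuffle_cons_cons, ← List.replicate_succ]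
          calc ((shuffle w [a]).bind fun u => shuffle (x::u) (List.replicate (i+1) a))
                + shuffle (a::x::w) (List.replicate (i+1) a)
              = ((shuffle w [a]).bind (fun u => shuffle u (List.replicate (i+1) a))).map (x :: ·)
                + (((shuffle w [a]).bind (fun u => shuffle (x::u) (List.replicate i a))
                    + shuffle (a::x::w) (List.replicate i a)).map (a :: ·)
                  + (shuffle (x::w) (List.replicate (i+1) a)).map (a :: ·)) := by
                simp only [e1, e2, Multiset.bind_add, Multiset.map_bind, Multiset.map_add]
                abel
            _ = ((i+1+1) • shuffle w (List.replicate (i+1+1) a)).map (x :: ·)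
                + (((i+1) • shuffle (x::w) (List.replicate (i+1) a)).map (a :: ·)
                  + (shuffle (x::w) (List.replicate (i+1) a)).map (a :: ·)) := by
                rw [ihw (i+1), ← key, ihi]
            _ = (i+1+1) • shuffle (x::w) (List.replicate (i+1+1) a) := by
                rw [List.replicate_succ (a := a) (n := i+1), shuffle_cons_cons, ← List.replicate_succ,
                  smul_add]
                congr 1
                · rw [Multiset.map_nsmul]
                · rw [Multiset.map_nsmul]
                  exact (succ_nsmul _ (i+1)).symm

lemma multiset_sum_nsmul' {M : Type*} [AddCommMonoid M] (n : ℕ) (s : Multiset M) :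
    (n • s).sum = n • s.sum := by
  induction n with
  | zero => simp
  | succ n ih => simp [succ_nsmul, ih]

lemma sum_map_finset_sum {α β A : Type*} [AddCommMonoid A] (s : Multiset α) (t : Finset β)
    (g : α → β → A) :
    (s.map (fun u => ∑ i ∈ t, g u i)).sum = ∑ i ∈ t, (s.map (fun u => g u i)).sum := by
  induction s using Multiset.induction with
  | empty => simp
  | cons x s ih => simp [ih, Finset.sum_add_distrib]

section Char
variable {X A : Type*} [CommRing A]
variable (I : List X → A)
variable (hImul : ∀ u v : List X, I u * I v = ((shuffle u v).map I).sum)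

include hImul

/-- `I(a)·I(aᵏ) = (k+1)·I(aᵏ⁺¹)` -/
lemma char_pow (a : X) (k : ℕ) :
    I [a] * I (List.replicate k a) = ((k:A)+1) * I (List.replicate (k+1) a) := by
  rw [hImul, shuffle_single_replicate, Multiset.map_replicate, Multiset.sum_replicate,
    nsmul_eq_mul]
  push_cast
  ring

/-- the basic recursion -/
lemma char_rec (a b : X) (m : ℕ) (w : List X) :
    I [a] * I (w ++ b :: List.replicate m a)
      = ((shuffle w [a]).map (fun u => I (u ++ b :: List.replicate m a))).sum
        + ((m:A)+1) * I (w ++ b :: List.replicate (m+1) a) := by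
  rw [hImul, shuffle_single_word, Multiset.map_add, Multiset.sum_add, Multiset.map_map,
    Multiset.map_replicate, Multiset.sum_replicate, nsmul_eq_mul]
  simp only [Function.comp_def]
  push_cast
  ring

omit hImul in
/-- `Σ_{u ∈ w ⧢ a} F_u(i) = (i+1) F_w(i+1)` -/
lemma char_fsh (a b : X) (w : List X) (i : ℕ) :
    ((shuffle w [a]).map
        (fun u => ((shuffle u (List.replicate i a)).map (fun v => I (v ++ [b]))).sum)).sum
      = ((i:A)+1) *
        ((shuffle w (List.replicate (i+1) a)).map (fun v => I (v ++ [b]))).sum := by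
  have h1 : ((shuffle w [a]).map
        (fun u => ((shuffle u (List.replicate i a)).map (fun v => I (v ++ [b]))).sum)).sum
      = (((shuffle w [a]).bind (fun u => shuffle u (List.replicate i a))).map
          (fun v => I (v ++ [b]))).sum := by
    rw [Multiset.map_bind, Multiset.sum_bind]
  rw [h1, shuffle_bind_single, Multiset.map_nsmul, multiset_sum_nsmul', nsmul_eq_mul]
  push_cast
  ring

end Char

lemma final_sums {A : Type*} [CommRing A] (Ia : A) (r F : ℕ → A) (n : ℕ)
    (hpow : ∀ k, Ia * r k = ((k:A)+1) * r (k+1)) :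
    Ia * (∑ i ∈ Finset.range (n+1), (-1:A)^i * r (n-i) * F i)
      - ∑ i ∈ Finset.range (n+1), (-1:A)^i * r (n-i) * (((i:A)+1) * F (i+1))
    = ((n:A)+1) * ∑ i ∈ Finset.range (n+2), (-1:A)^i * r (n+1-i) * F i := by
  rw [Finset.mul_sum, Finset.mul_sum]
  have lhs1 : ∑ i ∈ Finset.range (n+1), Ia * ((-1:A)^i * r (n-i) * F i)
      = ∑ i ∈ Finset.range (n+1), ((n:A) + 1 - i) * ((-1:A)^i * r (n+1-i) * F i) := by
    refine Finset.sum_congr rfl fun i hi => ?_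
    have hi' : i ≤ n := by simpa [Nat.lt_succ_iff] using hi
    have h1 : n - i + 1 = n + 1 - i := by omega
    have h2 : ((n - i : ℕ) : A) = (n:A) - i := by
      rw [Nat.cast_sub hi']
    calc Ia * ((-1:A)^i * r (n-i) * F i)
        = ((-1:A)^i * (Ia * r (n-i))) * F i := by ring
      _ = ((-1:A)^i * (((((n-i:ℕ)):A)+1) * r (n-i+1))) * F i := by rw [hpow (n-i)]
      _ = ((n:A) + 1 - i) * ((-1:A)^i * r (n+1-i) * F i) := by rw [h1, h2]; ring
  rw [lhs1]
  have split : ∑ i ∈ Finset.range (n+2), ((n:A)+1) * ((-1:A)^i * r (n+1-i) * F i)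
      = ∑ i ∈ Finset.range (n+2), (((n:A)+1-i) * ((-1:A)^i * r (n+1-i) * F i)
          + (i:A) * ((-1:A)^i * r (n+1-i) * F i)) := by
    refine Finset.sum_congr rfl fun i _ => by ring
  rw [split, Finset.sum_add_distrib]
  have peelA : ∑ i ∈ Finset.range (n+2), ((n:A)+1-i) * ((-1:A)^i * r (n+1-i) * F i)
      = ∑ i ∈ Finset.range (n+1), ((n:A)+1-i) * ((-1:A)^i * r (n+1-i) * F i) := by
    rw [Finset.sum_range_succ]
    have : ((n:A)+1-((n+1:ℕ):A)) = 0 := by push_cast; ring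
    rw [this, zero_mul, add_zero]
  have peelB : ∑ i ∈ Finset.range (n+2), (i:A) * ((-1:A)^i * r (n+1-i) * F i)
      = - ∑ i ∈ Finset.range (n+1), (-1:A)^i * r (n-i) * (((i:A)+1) * F (i+1)) := by
    rw [Finset.sum_range_succ' (fun i => (i:A) * ((-1:A)^i * r (n+1-i) * F i)) (n+1)]
    simp only [Nat.cast_zero, zero_mul, add_zero]
    rw [← Finset.sum_neg_distrib]
    refine Finset.sum_congr rfl fun i _ => ?_
    have h3 : n + 1 - (i + 1) = n - i := by omega
    rw [h3, pow_succ]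
    push_cast
    ring
  rw [peelA, peelB]
  ring

/-- Un-shuffle identity: for any character `I` of the shuffle algebra with values in a
commutative ℚ-algebra `A` (i.e. `I [] = 1` and `I u * I v = I (u ⧢ v)`), any word `w`,
letters `a, b` and `n ≥ 0`:
`I(w·b·aⁿ) = Σ_{i=0}^{n} (−1)^i I(a^{n−i}) I((w ⧢ aⁱ)·b)`. -/
theorem stmt11 {X A : Type*} [CommRing A] [Algebra ℚ A]
    (I : List X → A) (hI1 : I [] = 1)
    (hImul : ∀ u v : List X, I u * I v = ((shuffle u v).map I).sum)
    (w : List X) (a b : X) (n : ℕ) :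
    I (w ++ b :: List.replicate n a) =
      ∑ i ∈ Finset.range (n + 1),
        (-1 : A) ^ i * I (List.replicate (n - i) a) *
          ((shuffle w (List.replicate i a)).map (fun u => I (u ++ [b]))).sum := by
  induction n generalizing w with
  | zero => simp [shuffle_nil_right, hI1]
  | succ n ih =>
      have hu : IsUnit ((n:A)+1) := by
        have heq : ((n:A)+1) = algebraMap ℚ A ((n:ℚ)+1) := by
          simp [map_add, map_natCast]
        rw [heq]
        exact (isUnit_iff_ne_zero.mpr (by positivity)).map (algebraMap ℚ A)
      apply hu.mul_left_cancel
      have e1 := char_rec I hImul a b n w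
      have eS : ((shuffle w [a]).map (fun u => I (u ++ b :: List.replicate n a))).sum
          = ∑ i ∈ Finset.range (n+1), (-1:A)^i * I (List.replicate (n-i) a) *
              (((i:A)+1) *
                ((shuffle w (List.replicate (i+1) a)).map (fun u => I (u ++ [b]))).sum) := by
        have hcongr : ((shuffle w [a]).map (fun u => I (u ++ b :: List.replicate n a))).sum
            = ((shuffle w [a]).map (fun u => ∑ i ∈ Finset.range (n+1),
                (-1:A)^i * I (List.replicate (n-i) a) *
                  ((shuffle u (List.replicate i a)).map (fun v => I (v ++ [b]))).sum)).sum := by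
          exact congrArg Multiset.sum (Multiset.map_congr rfl (fun u _ => ih u))
        rw [hcongr, sum_map_finset_sum]
        refine Finset.sum_congr rfl (fun i _ => ?_)
        rw [Multiset.sum_map_mul_left, char_fsh I a b w i]
      have key : ((n:A)+1) * I (w ++ b :: List.replicate (n+1) a)
          = I [a] * I (w ++ b :: List.replicate n a)
            - ((shuffle w [a]).map (fun u => I (u ++ b :: List.replicate n a))).sum := by
        linear_combination -e1
      rw [key, ih w, eS]
      exact final_sums (I [a]) (fun k => I (List.replicate k a))
        (fun i => ((shuffle w (List.replicate i a)).map (fun u => I (u ++ [b]))).sum) n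
        (fun k => char_pow I hImul a k)
end

section
/- With the ordering 0 ≺ x ≺ y on the source alphabet and g₁ ≻ f₁ ≻ f₂ ≻ f₃ ≻ ⋯ on the target alphabet (so that ψ₀ preserves order), the bijection ψ₀ (mapping each block 0^{k−1}x to f_k and each y to g₁) restricts to a bijection between Lyndon words among admissible words over {0,x,y} and Lyndon words over {g₁, f₁, f₂, …}. -/
/-- The source alphabet {0, x, y}. -/
inductive L3 : Type
  | z | x | y
  deriving DecidableEq

/-- Rank realizing the order 0 ≺ x ≺ y. -/
def rank3 : L3 → ℕ
  | L3.z => 0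
  | L3.x => 1
  | L3.y => 2

instance : LinearOrder L3 :=
  LinearOrder.lift' rank3 (by intro a b h; cases a <;> cases b <;> simp_all [rank3])

/-- The target alphabet {g₁} ∪ {f_k : k ≥ 1}. -/
inductive T : Type
  | g
  | f (k : ℕ+)
  deriving DecidableEq

/-- Rank realizing the order ⋯ ≺ f₂ ≺ f₁ ≺ g₁. -/
def rankT : T → ℤ
  | T.g => 0
  | T.f k => -(k : ℤ)

instance : LinearOrder T :=
  LinearOrder.lift' rankT (by
    intro a b h
    cases a <;> cases b <;> simp_all [rankT])

/-- A word over {0,x,y} is admissible if it has no subword `0y` and does not end in `0`. -/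
def Admissible (w : List L3) : Prop :=
  ¬ ([L3.z, L3.y] <:+: w) ∧ w.getLast? ≠ some L3.z

/-- The map ψ₀: each maximal block 0^{k-1}x maps to f_k, each y maps to g₁. -/
def psi0 : List L3 → List T
  | [] => []
  | L3.y :: r => T.g :: psi0 r
  | L3.x :: r => T.f 1 :: psi0 r
  | L3.z :: r =>
    match psi0 r with
    | T.f k :: t => T.f (k + 1) :: t
    | t => t

open List

lemma zx : L3.z < L3.x := by decide
lemma zy : L3.z < L3.y := by decide
lemma xy : L3.x < L3.y := by decide

lemma f_lt_f {k j : ℕ+} (h : (j:ℕ) < (k:ℕ)) : T.f k < T.f j := by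
  show rankT _ < rankT _
  simp only [rankT]
  omega

lemma f_lt_f_iff {k j : ℕ+} : T.f k < T.f j ↔ (j:ℕ) < (k:ℕ) := by
  constructor
  · intro h; by_contra hc
    exact absurd (show rankT (T.f k) < rankT (T.f j) from h) (by simp only [rankT]; omega)
  · exact f_lt_f

def phi : List T → List L3
  | [] => []
  | T.g :: r => L3.y :: phi r
  | T.f k :: r => List.replicate ((k:ℕ)-1) L3.z ++ L3.x :: phi r

lemma phi_append (a b : List T) : phi (a ++ b) = phi a ++ phi b := by
  induction a with
  | nil => rfl
  | cons c r ih => cases c <;> simp [phi, ih]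

lemma phi_ne_nil {t : List T} (h : t ≠ []) : phi t ≠ [] := by
  cases t with
  | nil => exact absurd rfl h
  | cons c r => cases c <;> simp [phi]

lemma psi0_rep (m : ℕ) (s : List L3) :
    psi0 (List.replicate m L3.z ++ L3.x :: s) = T.f ⟨m+1, Nat.succ_pos m⟩ :: psi0 s := by
  induction m with
  | zero => simp [psi0]
  | succ n ih =>
    rw [List.replicate_succ, List.cons_append]
    show psi0 (L3.z :: _) = _
    rw [psi0, ih]
    rfl

lemma psi0_phi (t : List T) : psi0 (phi t) = t := by
  induction t with
  | nil => rfl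
  | cons c r ih =>
    cases c with
    | g => rw [phi]; rw [psi0, ih]
    | f k =>
      rw [phi, psi0_rep, ih]
      have : (⟨(k:ℕ)-1+1, Nat.succ_pos _⟩ : ℕ+) = k := by
        have := k.pos
        exact PNat.coe_injective (by simp; omega)
      rw [this]

lemma phi_inj {s t : List T} (h : phi s = phi t) : s = t := by
  have := congrArg psi0 h
  rwa [psi0_phi, psi0_phi] at this

lemma nzy_block (m : ℕ) (s : List L3) (hs : ¬ [L3.z, L3.y] <:+: s) :
    ¬ [L3.z, L3.y] <:+: (List.replicate m L3.z ++ L3.x :: s) := by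
  induction m with
  | zero =>
    simp only [List.replicate, List.nil_append]
    rw [List.infix_cons_iff]
    rintro (⟨t, ht⟩ | h)
    · simp at ht
    · exact hs h
  | succ n ih =>
    rw [List.replicate_succ, List.cons_append, List.infix_cons_iff]
    rintro (hpre | h)
    · obtain ⟨t, ht⟩ := hpre
      cases n with
      | zero => simp at ht
      | succ n' => rw [List.replicate_succ, List.cons_append] at ht; simp at ht
    · exact ih h

lemma phi_nzy (t : List T) : ¬ [L3.z, L3.y] <:+: phi t := by
  induction t with
  | nil => simp [phi]
  | cons c r ih =>
    cases c with
    | g =>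
      rw [phi, List.infix_cons_iff]
      rintro (⟨t', ht⟩ | h)
      · simp at ht
      · exact ih h
    | f k => exact nzy_block _ _ ih

lemma phi_last (t : List T) : (phi t).getLast? ≠ some L3.z := by
  induction t with
  | nil => simp [phi]
  | cons c r ih =>
    cases c with
    | g =>
      rw [phi, show L3.y :: phi r = [L3.y] ++ phi r from rfl, List.getLast?_append]
      cases h : (phi r).getLast? with
      | none => simp
      | some a => simp only [Option.some_or]; rw [h] at ih; simpa using ih
    | f k =>
      rw [phi, show List.replicate ((k:ℕ)-1) L3.z ++ L3.x :: phi r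
            = (List.replicate ((k:ℕ)-1) L3.z ++ [L3.x]) ++ phi r by simp,
          List.getLast?_append]
      cases h : (phi r).getLast? with
      | none => simp [List.getLast?_append]
      | some a => simp only [Option.some_or]; rw [h] at ih; simpa using ih

lemma phi_admissible (t : List T) : Admissible (phi t) :=
  ⟨phi_nzy t, phi_last t⟩

lemma admissible_tail {a : L3} {r : List L3} (h : Admissible (a :: r)) : Admissible r := by
  refine ⟨fun hi => h.1 (List.infix_cons_iff.mpr (Or.inr hi)), ?_⟩
  cases r with
  | nil => simp
  | cons b r' => simpa using h.2

lemma adm_z {r : List L3} (h : Admissible (L3.z :: r)) :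
    r ≠ [] ∧ ∃ r', r = L3.z :: r' ∨ r = L3.x :: r' := by
  cases r with
  | nil => exact absurd rfl h.2
  | cons b r' =>
    refine ⟨by simp, ?_⟩
    cases b with
    | z => exact ⟨r', Or.inl rfl⟩
    | x => exact ⟨r', Or.inr rfl⟩
    | y => exact absurd (List.infix_cons_iff.mpr (Or.inl ⟨r', rfl⟩)) h.1

lemma headf : ∀ w : List L3, Admissible w → (∃ r, w = L3.z :: r ∨ w = L3.x :: r) →
    ∃ (k : ℕ+) (t' : List T), psi0 w = T.f k :: t' := by
  intro w
  induction w with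
  | nil => rintro - ⟨r, hr | hr⟩ <;> simp at hr
  | cons a w' ih =>
    rintro h ⟨r, hr | hr⟩
    · obtain ⟨rfl, -⟩ : a = L3.z ∧ w' = r := by injection hr with h1 h2; exact ⟨h1, h2⟩
      obtain ⟨hne, r', hshape⟩ := adm_z h
      obtain ⟨k, t', hk⟩ := ih (admissible_tail h)
        ⟨r', by rcases hshape with hs | hs <;> [exact Or.inl hs; exact Or.inr hs]⟩
      exact ⟨k+1, t', by rw [psi0, hk]⟩
    · obtain ⟨rfl, -⟩ : a = L3.x ∧ w' = r := by injection hr with h1 h2; exact ⟨h1, h2⟩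
      exact ⟨1, psi0 w', by rw [psi0]⟩

lemma phi_psi0 : ∀ w : List L3, Admissible w → phi (psi0 w) = w := by
  intro w
  induction w with
  | nil => intro _; rfl
  | cons a w' ih =>
    intro h
    have hw' := ih (admissible_tail h)
    cases a with
    | y => rw [psi0, phi, hw']
    | x => rw [psi0, phi]; simp [hw']
    | z =>
      obtain ⟨k, t', hk⟩ := headf w' (admissible_tail h)
        (by obtain ⟨-, r', hs | hs⟩ := adm_z h <;> exact ⟨r', by simp [hs]⟩)
      rw [psi0, hk]
      show phi (T.f (k+1) :: t') = _
      rw [phi]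
      rw [hk, phi] at hw'
      have hco : ((k+1 : ℕ+) : ℕ) - 1 = ((k:ℕ) - 1) + 1 := by
        have := k.pos; simp [PNat.add_coe]; omega
      rw [hco, List.replicate_succ, List.cons_append, hw']

lemma lex_append_left {α : Type*} {r : α → α → Prop} (u : List α) {s t : List α}
    (h : List.Lex r s t) : List.Lex r (u ++ s) (u ++ t) := by
  induction u with
  | nil => exact h
  | cons a u' ih => exact List.Lex.cons ih

lemma lex_nil' {α : Type*} {r : α → α → Prop} {t : List α} (h : t ≠ []) : List.Lex r [] t := by
  cases t with
  | nil => exact absurd rfl h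
  | cons a t' => exact List.Lex.nil

lemma lt_append {α : Type*} [LinearOrder α] (l : List α) {s : List α} (hs : s ≠ []) :
    l < l ++ s := by
  show List.Lex (·<·) l (l ++ s)
  induction l with
  | nil => exact lex_nil' (by simpa using hs)
  | cons a l' ih => exact List.Lex.cons ih

lemma lex_block_y (m : ℕ) (s t : List L3) :
    List.Lex (·<·) (List.replicate m L3.z ++ L3.x :: s) (L3.y :: t) := by
  cases m with
  | zero => exact List.Lex.rel xy
  | succ n => rw [List.replicate_succ, List.cons_append]; exact List.Lex.rel zy

lemma phi_lt {s t : List T} (h : s < t) : phi s < phi t := by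
  show List.Lex (·<·) (phi s) (phi t)
  induction h with
  | nil => exact lex_nil' (phi_ne_nil (List.cons_ne_nil _ _))
  | @cons a l₁ l₂ h ih =>
    show List.Lex (·<·) (phi ([a] ++ l₁)) (phi ([a] ++ l₂))
    rw [phi_append, phi_append]
    exact lex_append_left _ ih
  | @rel a l₁ b l₂ hab =>
    cases a with
    | g =>
      cases b with
      | g => exact absurd hab (lt_irrefl _)
      | f j =>
        exfalso
        have hr : rankT T.g < rankT (T.f j) := hab
        simp only [rankT] at hr
        omega
    | f k =>
      cases b with
      | g => exact lex_block_y _ _ _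
      | f j =>
        have hj : (j:ℕ) < (k:ℕ) := f_lt_f_iff.mp hab
        have hj1 := j.pos
        rw [phi, phi]
        have hsplit : (k:ℕ) - 1 = ((j:ℕ) - 1) + (((k:ℕ) - (j:ℕ) - 1) + 1) := by omega
        rw [hsplit, List.replicate_add, List.append_assoc, List.replicate_succ,
          List.cons_append]
        exact lex_append_left _ (List.Lex.rel zx)

lemma phi_lt_iff {s t : List T} : s < t ↔ phi s < phi t := by
  constructor
  · exact phi_lt
  · intro h
    rcases lt_trichotomy s t with h' | rfl | h'
    · exact h'
    · exact absurd h (lt_irrefl _)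
    · exact absurd h (asymm (phi_lt h'))

lemma split_rep : ∀ (n : ℕ) (u v s : List L3), u ++ v = List.replicate n L3.z ++ L3.x :: s →
    (u = List.replicate u.length L3.z ∧ u.length ≤ n ∧
      v = List.replicate (n - u.length) L3.z ++ L3.x :: s) ∨
    (∃ u', u = List.replicate n L3.z ++ L3.x :: u' ∧ u' ++ v = s) := by
  intro n
  induction n with
  | zero =>
    intro u v s h
    simp only [List.replicate, List.nil_append] at h
    cases u with
    | nil => left; simpa using h
    | cons d u' =>
      rw [List.cons_append] at h
      injection h with h1 h2
      subst h1
      exact Or.inr ⟨u', by simp, h2⟩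
  | succ n' ih =>
    intro u v s h
    cases u with
    | nil => left; simpa using h
    | cons d u' =>
      rw [List.replicate_succ, List.cons_append, List.cons_append] at h
      injection h with h1 h2
      subst h1
      rcases ih u' v s h2 with ⟨hu, hlen, hv⟩ | ⟨u'', hu, hs⟩
      · left
        refine ⟨?_, by simp only [List.length_cons]; omega, ?_⟩
        · rw [List.length_cons, List.replicate_succ]
          exact congrArg _ hu
        · have e : n' + 1 - (L3.z :: u').length = n' - u'.length := by
            simp only [List.length_cons]; omega
          rw [e, hv]
      · right
        exact ⟨u'', by rw [List.replicate_succ, List.cons_append, hu], hs⟩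

lemma split_phi : ∀ (t : List T) (u v : List L3), phi t = u ++ v →
    (∃ a b, t = a ++ b ∧ u = phi a ∧ v = phi b) ∨
    (∃ (a : List T) (k : ℕ+) (r : List T) (i : ℕ), t = a ++ T.f k :: r ∧ 1 ≤ i ∧ i ≤ (k:ℕ) - 1 ∧
      u = phi a ++ List.replicate i L3.z ∧
      v = List.replicate ((k:ℕ) - 1 - i) L3.z ++ L3.x :: phi r) := by
  intro t
  induction t with
  | nil =>
    intro u v h
    rw [phi] at h
    obtain ⟨hu, hv⟩ := List.append_eq_nil_iff.mp h.symm
    exact Or.inl ⟨[], [], rfl, hu, hv⟩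
  | cons c r ih =>
    intro u v h
    cases c with
    | g =>
      rw [phi] at h
      cases u with
      | nil => exact Or.inl ⟨[], T.g :: r, rfl, rfl, by simpa [phi] using h.symm⟩
      | cons d u' =>
        rw [List.cons_append] at h
        injection h with h1 h2
        rcases ih u' v h2 with ⟨a, b, hab, hu, hv⟩ | ⟨a, k, r', i, hab, hi1, hi2, hu, hv⟩
        · exact Or.inl ⟨T.g :: a, b, by rw [hab, List.cons_append],
            by rw [phi, ← hu, h1], hv⟩
        · exact Or.inr ⟨T.g :: a, k, r', i, by rw [hab, List.cons_append], hi1, hi2,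
            by rw [phi, List.cons_append, ← hu, ← h1], hv⟩
    | f m =>
      rw [phi] at h
      rcases split_rep _ u v (phi r) h.symm with ⟨hu, hlen, hv⟩ | ⟨u', hu, hs⟩
      · cases hul : u.length with
        | zero =>
          have : u = [] := List.eq_nil_of_length_eq_zero hul
          subst this
          refine Or.inl ⟨[], T.f m :: r, rfl, rfl, ?_⟩
          rw [hv, phi]; simp
        | succ n =>
          refine Or.inr ⟨[], m, r, u.length, rfl, by omega, hlen, ?_, hv⟩
          rw [phi, List.nil_append]; exact hu
      · rcases ih u' v hs.symm with ⟨a, b, hab, hu', hv⟩ | ⟨a, k, r', i, hab, hi1, hi2, hu', hv⟩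
        · refine Or.inl ⟨T.f m :: a, b, by rw [hab, List.cons_append], ?_, hv⟩
          rw [phi, ← hu', hu]
        · refine Or.inr ⟨T.f m :: a, k, r', i, by rw [hab, List.cons_append], hi1, hi2, ?_, hv⟩
          rw [phi, hu, hu']
          simp

lemma lex_mid (n i : ℕ) (hi : 1 ≤ i) (hin : i ≤ n) (s u' : List L3) :
    List.Lex (·<·) (List.replicate n L3.z ++ L3.x :: s)
      ((List.replicate (n-i) L3.z ++ L3.x :: s) ++ u') := by
  have h1 : List.replicate n L3.z ++ L3.x :: s
      = List.replicate (n-i) L3.z ++ (L3.z :: (List.replicate (i-1) L3.z ++ L3.x :: s)) := by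
    conv_lhs => rw [show n = (n-i) + ((i-1)+1) from by omega]
    rw [List.replicate_add, List.append_assoc, List.replicate_succ, List.cons_append]
  have h2 : (List.replicate (n-i) L3.z ++ L3.x :: s) ++ u'
      = List.replicate (n-i) L3.z ++ (L3.x :: (s ++ u')) := by
    simp [List.append_assoc]
  rw [h1, h2]
  exact lex_append_left _ (List.Lex.rel zx)

lemma key (t : List T) : IsLyndon (phi t) ↔ IsLyndon t := by
  constructor
  · intro h
    refine ⟨?_, ?_⟩
    · rintro rfl; exact h.1 rfl
    · intro a b hab ha hb
      have h2 := h.2 (phi a) (phi b) (by rw [hab, phi_append]) (phi_ne_nil ha) (phi_ne_nil hb)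
      rw [← phi_append] at h2
      exact phi_lt_iff.mpr h2
  · intro h
    refine ⟨phi_ne_nil h.1, ?_⟩
    intro u v heq hu hv
    rcases split_phi t u v heq with ⟨a, b, hab, hua, hvb⟩ |
      ⟨a, k, r, i, hab, hi1, hi2, hua, hvv⟩
    · have ha : a ≠ [] := by rintro rfl; exact hu hua
      have hb : b ≠ [] := by rintro rfl; exact hv hvb
      have h2 := phi_lt (h.2 a b hab ha hb)
      rw [phi_append] at h2
      rw [hua, hvb]
      exact h2
    · have hk1 : 1 ≤ (k:ℕ) := k.pos
      by_cases ha : a = []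
      · subst ha
        rw [hab, hua, hvv]
        simp only [List.nil_append, phi]
        exact lex_mid ((k:ℕ)-1) i hi1 hi2 (phi r) _
      · have h2 := h.2 a (T.f k :: r) hab ha (List.cons_ne_nil _ _)
        set j : ℕ := (k:ℕ) - 1 - i with hj
        have hjk : j + 1 < (k:ℕ) := by omega
        set k' : ℕ+ := ⟨j+1, Nat.succ_pos j⟩ with hk'
        have hlt : T.f k < T.f k' := f_lt_f hjk
        have step : (T.f k :: r) ++ a < T.f k' :: (r ++ a) := by
          rw [List.cons_append]
          exact List.Lex.rel hlt
        have ht' : t < T.f k' :: (r ++ a) := lt_trans h2 step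
        have hphi := phi_lt ht'
        have e2 : phi (T.f k' :: (r ++ a)) = List.replicate j L3.z ++ L3.x :: (phi r ++ phi a) := by
          rw [phi, phi_append]
          norm_num
          rfl
        have e3 : v ++ u = phi (T.f k' :: (r ++ a)) ++ List.replicate i L3.z := by
          rw [hvv, hua, e2]
          simp [List.append_assoc]
        rw [e3]
        refine lt_trans hphi (lt_append _ ?_)
        intro hc
        have := congrArg List.length hc
        simp at this
        omega
/-- ψ₀ restricts to a bijection between Lyndon words among admissible words over
{0,x,y} and Lyndon words over the target alphabet. -/
theorem stmt15 :
    (∀ w : List L3, Admissible w → (IsLyndon w ↔ IsLyndon (psi0 w))) ∧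
      Set.BijOn psi0 {w : List L3 | Admissible w ∧ IsLyndon w}
        {t : List T | IsLyndon t} := by
  constructor
  · intro w hw
    have h := key (psi0 w)
    rw [phi_psi0 w hw] at h
    exact h
  · refine ⟨?_, ?_, ?_⟩
    · intro w hw
      have h := key (psi0 w)
      rw [phi_psi0 w hw.1] at h
      exact h.mp hw.2
    · intro w1 h1 w2 h2 heq
      have h := congrArg phi heq
      rwa [phi_psi0 w1 h1.1, phi_psi0 w2 h2.1] at h
    · intro t ht
      exact ⟨phi t, ⟨phi_admissible t, (key t).mpr ht⟩, psi0_phi t⟩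
end
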